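/- arXiv:1210.2871 — 4 statements merged into one kernel-verified Lean document; each statement's English description precedes it below -/
import Mathlib

section
/- Let T be a tree and v1 x1 ... xn v2 a path between leaves. With C_k = f_{x_k}(X_k), C_{\le k-1} and C_{\ge k+2} as defined, if C_{\le k-1} < C_{\ge k+2} and C_k > C_{k+1}, then the tree S obtained from T by swapping the components X_k and X_{k+1} (reattaching X_{k+1} at position k and X_k at position k+1 on the path) satisfies f(S) > f(T), where f denotes the total number of subtrees. Moreover f(S) - f(T) = (C_k - C_{k+1})(C_{\ge k+2} - C_{\le k-1}). -/
/-!
Cutting the path edges `x_{k-1} x_k`, `x_k x_{k+1}`, `x_{k+1} x_{k+2}` leaves a forest `H` in which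
`a = x_{k-1}`, `b = x_k`, `c = x_{k+1}`, `d = x_{k+2}` lie in four different components, so `T` is
`H` plus the path `a b c d` and `S` is `H` plus the path `a c b d`. A vertex set that is connected
in `T` but not in `S` uses the edge `a b` without containing `c`, or `c d` without `b`. As `a b` is
the only edge between the components of `a` and `b`, the sets of the first kind are the unions of a
subtree at `a` and one at `b`, so there are `C_{≤k-1} C_k` of them, and `C_{k+1} C_{≥k+2}` of the
second kind. Symmetrically, `C_{≤k-1} C_{k+1} + C_k C_{≥k+2}` sets are connected only in `S`, and
the difference factors.
-/

open SimpleGraph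

/-- The total number of subtrees of `G`: nonempty connected induced sub-vertex-sets. -/
noncomputable def numSubtrees {V : Type*} [Fintype V] (G : SimpleGraph V) : ℕ :=
  Set.ncard {s : Set V | s.Nonempty ∧ (G.induce s).Connected}

/-- The number of subtrees of (the induced subgraph of `G` on) the vertex set `A`
that contain the vertex `u`. -/
noncomputable def numSubtreesIn {V : Type*} [Fintype V] (G : SimpleGraph V)
    (A : Set V) (u : V) : ℕ :=
  Set.ncard {s : Set V | u ∈ s ∧ s ⊆ A ∧ (G.induce s).Connected}

/-- The set of vertices reachable from `u` in `G`. -/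
def reachSet {V : Type*} (G : SimpleGraph V) (u : V) : Set V :=
  {v | G.Reachable u v}

namespace SimpleGraph

variable {V : Type*}

section Connectivity

lemma Reachable.map_of_forall_adj {W : Type*} {K : SimpleGraph V} {K' : SimpleGraph W}
    (f : V → W) (h : ∀ u v, K.Adj u v → K'.Reachable (f u) (f v)) {u v : V}
    (huv : K.Reachable u v) : K'.Reachable (f u) (f v) := by
  rw [reachable_iff_reflTransGen] at huv ⊢
  exact Relation.ReflTransGen.lift' f
    (fun u v huv => (reachable_iff_reflTransGen _ _).1 (h u v huv)) u v huv

lemma Connected.of_forall_adj_reachable {K K' : SimpleGraph V} (hK : K.Connected)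
    (h : ∀ u v, K.Adj u v → K'.Reachable u v) : K'.Connected :=
  (connected_iff _).2 ⟨fun u v => (hK u v).map_of_forall_adj id h, hK.nonempty⟩

variable {G : SimpleGraph V} {s P : Set V}

lemma exists_adj_of_induce_connected (hs : (G.induce s).Connected) {u v : V} (hu : u ∈ s)
    (hv : v ∈ s) (huP : u ∈ P) (hvP : v ∉ P) :
    ∃ x ∈ s, ∃ y ∈ s, G.Adj x y ∧ x ∈ P ∧ y ∉ P := by
  obtain ⟨w⟩ := hs.preconnected ⟨u, hu⟩ ⟨v, hv⟩
  obtain ⟨d, -, hd₁, hd₂⟩ := w.exists_boundary_dart (Subtype.val ⁻¹' P) huP hvP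
  exact ⟨d.fst, d.fst.2, d.snd, d.snd.2, d.adj, hd₁, hd₂⟩

lemma induce_inter_connected (hs : (G.induce s).Connected) {p : V} (hps : p ∈ s) (hpP : p ∈ P)
    (hexit : ∀ x ∈ s, ∀ y ∈ s, G.Adj x y → x ∈ P → y ∉ P → x = p) :
    (G.induce (s ∩ P)).Connected := by
  classical
  -- retract `s` onto `s ∩ P` by sending everything outside `P` to `p`
  let r : s → ↥(s ∩ P) := fun z => if h : (z : V) ∈ P then ⟨z, z.2, h⟩ else ⟨p, hps, hpP⟩
  have hr : ∀ z : ↥(s ∩ P), r ⟨z, z.2.1⟩ = z := fun z => by simp [r, z.2.2]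
  have hadj : ∀ u v, (G.induce s).Adj u v → (G.induce (s ∩ P)).Reachable (r u) (r v) := by
    intro u v huv
    by_cases hu : (u : V) ∈ P <;> by_cases hv : (v : V) ∈ P
    · exact Adj.reachable (by simpa [r, hu, hv] using huv)
    · simp [r, hv, hpP, hexit u u.2 v v.2 huv hu hv]
    · simp [r, hu, hpP, hexit v v.2 u u.2 huv.symm hv hu]
    · simp [r, hu, hv]
  refine (connected_iff _).2 ⟨fun u v => ?_, ⟨⟨p, hps, hpP⟩⟩⟩
  simpa [hr] using (hs.preconnected ⟨u, u.2.1⟩ ⟨v, v.2.1⟩).map_of_forall_adj r hadj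

lemma mem_reachSet_of_adj {v : V} (x y : V) (h : G.Adj x y) (hx : x ∈ reachSet G v) :
    y ∈ reachSet G v :=
  Reachable.trans hx h.reachable

lemma reachable_of_forall_adj {x : ℕ → V} {i j : ℕ} (hij : i ≤ j)
    (h : ∀ m, i ≤ m → m < j → G.Adj (x m) (x (m + 1))) : G.Reachable (x i) (x j) := by
  induction j, hij using Nat.le_induction with
  | base => rfl
  | succ j hij ih =>
    exact (ih fun m h₁ h₂ => h m h₁ (by omega)).trans (h j hij (by omega)).reachable

lemma reachSet_deleteEdges {F : Set (Sym2 V)} {u : V}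
    (hF : ∀ e ∈ F, ∃ v ∈ e, ¬G.Reachable u v) : reachSet (G.deleteEdges F) u = reachSet G u := by
  classical
  ext v
  refine ⟨fun h => h.mono (deleteEdges_le _), fun ⟨w⟩ => ⟨w.toDeleteEdges F fun e he heF => ?_⟩⟩
  obtain ⟨z, hz, hzu⟩ := hF e heF
  exact hzu (w.takeUntil z (Walk.mem_support_of_mem_edges he hz)).reachable

lemma reachSet_eq_singleton {v : V} (hv : ∀ w, ¬G.Adj v w) :
    reachSet G v = {v} := by
  ext w
  refine ⟨fun ⟨p⟩ => ?_, fun h => h ▸ Reachable.refl v⟩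
  cases p with
  | nil => rfl
  | cons h _ => exact absurd h (hv _)

end Connectivity

section Counting

def subtreeSet (G : SimpleGraph V) : Set (Set V) :=
  {s | s.Nonempty ∧ (G.induce s).Connected}

variable [Fintype V]

/-- `f_v(X_v)`, where `X_v` is the component of `v` in `H`. -/
noncomputable def numSubtreesAt (H : SimpleGraph V) (v : V) : ℕ :=
  numSubtreesIn H (reachSet H v) v

lemma numSubtreesIn_singleton (G : SimpleGraph V) (v : V) :
    numSubtreesIn G {v} v = 1 := by
  rw [numSubtreesIn, Set.ncard_eq_one]
  refine ⟨{v}, Set.eq_singleton_iff_unique_mem.2 ⟨⟨rfl, le_rfl, ?_⟩, ?_⟩⟩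
  · exact (connected_iff _).2 ⟨Preconnected.of_subsingleton, ⟨⟨v, rfl⟩⟩⟩
  · exact fun s ⟨hv, hs, _⟩ => Set.Subset.antisymm hs (Set.singleton_subset_iff.2 hv)

lemma ncard_connected_subset_union {G : SimpleGraph V} {P Q : Set V} (hPQ : Disjoint P Q)
    {p q : V} (hp : p ∈ P) (hq : q ∈ Q) (hpq : G.Adj p q)
    (hcross : ∀ x ∈ P, ∀ y ∈ Q, G.Adj x y → x = p ∧ y = q) :
    {s : Set V | p ∈ s ∧ q ∈ s ∧ s ⊆ P ∪ Q ∧ (G.induce s).Connected}.ncard =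
      numSubtreesIn G P p * numSubtreesIn G Q q := by
  rw [numSubtreesIn, numSubtreesIn, ← Set.ncard_prod]
  refine Set.ncard_congr (fun s _ => (s ∩ P, s ∩ Q)) ?_ ?_ ?_
  · rintro s ⟨hps, hqs, hsPQ, hs⟩
    refine ⟨⟨⟨hps, hp⟩, Set.inter_subset_right, induce_inter_connected hs hps hp ?_⟩,
      ⟨⟨hqs, hq⟩, Set.inter_subset_right, induce_inter_connected hs hqs hq ?_⟩⟩
    · exact fun x _ y hy hxy hx hyP => (hcross x hx y ((hsPQ hy).resolve_left hyP) hxy).1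
    · exact fun x _ y hy hxy hx hyQ => (hcross y ((hsPQ hy).resolve_right hyQ) x hx hxy.symm).2
  · rintro s t ⟨-, -, hs, -⟩ ⟨-, -, ht, -⟩ h
    simp only [Prod.mk.injEq] at h
    rw [← Set.inter_eq_left.2 hs, ← Set.inter_eq_left.2 ht, Set.inter_union_distrib_left,
      Set.inter_union_distrib_left, h.1, h.2]
  · rintro ⟨t₁, t₂⟩ ⟨⟨hpt, htP, ht₁⟩, ⟨hqt, htQ, ht₂⟩⟩
    refine ⟨t₁ ∪ t₂, ⟨Or.inl hpt, Or.inr hqt, Set.union_subset_union htP htQ,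
      connected_induce_union ht₁.preconnected ht₂.preconnected hpt hqt hpq⟩, ?_⟩
    rw [Set.union_inter_distrib_right, Set.union_inter_distrib_right, Set.inter_eq_left.2 htP,
      Set.inter_eq_left.2 htQ, Set.disjoint_iff_inter_eq_empty.1 (hPQ.symm.mono_left htQ),
      Set.disjoint_iff_inter_eq_empty.1 (hPQ.mono_left htP), Set.union_empty, Set.empty_union]

lemma numSubtreesIn_sup_fromEdgeSet {H : SimpleGraph V} {E : Set (Sym2 V)} {P : Set V} (p : V)
    (hE : ∀ e ∈ E, ∃ v ∈ e, v ∉ P) :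
    numSubtreesIn (H ⊔ fromEdgeSet E) P p = numSubtreesIn H P p := by
  unfold numSubtreesIn
  congr 1
  ext s
  refine and_congr_right fun _ => and_congr_right fun hsP => ?_
  suffices (H ⊔ fromEdgeSet E).induce s = H.induce s by rw [this]
  ext u v
  refine ⟨fun h => h.resolve_right fun ⟨he, _⟩ => ?_, Or.inl⟩
  obtain ⟨w, hw, hwP⟩ := hE _ he
  exact hwP (hsP ((Sym2.mem_iff.1 hw).elim (· ▸ u.2) (· ▸ v.2)))

end Counting

section AddPath

def addPath (H : SimpleGraph V) (a b c d : V) : SimpleGraph V :=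
  H ⊔ fromEdgeSet {s(a, b), s(b, c), s(c, d)}

variable {T H : SimpleGraph V} {E : Set (Sym2 V)} {P s : Set V} {a b c d : V}

lemma addPath_reverse : addPath H d c b a = addPath H a b c d := by
  unfold addPath
  congr 2
  ext e
  simp only [Set.mem_insert_iff, Set.mem_singleton_iff]
  rw [show s(d, c) = s(c, d) from Sym2.eq_swap, show s(c, b) = s(b, c) from Sym2.eq_swap,
    show s(b, a) = s(a, b) from Sym2.eq_swap]
  tauto

lemma addPath_deleteEdges (hab : T.Adj a b) (hbc : T.Adj b c) (hcd : T.Adj c d) :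
    addPath (T.deleteEdges {s(a, b), s(b, c), s(c, d)}) a b c d = T := by
  ext u v
  simp only [addPath, sup_adj, deleteEdges_adj, fromEdgeSet_adj]
  by_cases he : s(u, v) ∈ ({s(a, b), s(b, c), s(c, d)} : Set (Sym2 V))
  · simp only [he, not_true_eq_false, and_false, true_and, false_or]
    refine ⟨fun _ => ?_, Adj.ne⟩
    simp only [Set.mem_insert_iff, Set.mem_singleton_iff] at he
    rcases he with he | he | he <;> rw [← mem_edgeSet, he] <;> assumption
  · simp [he]

lemma addPath_swap_deleteEdges (hbc : T.Adj b c) (hac : a ≠ c) (hbd : b ≠ d) :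
    addPath (T.deleteEdges {s(a, b), s(b, c), s(c, d)}) a c b d =
      T.deleteEdges {s(a, b), s(c, d)} ⊔ fromEdgeSet {s(a, c), s(b, d)} := by
  ext u v
  simp only [addPath, sup_adj, deleteEdges_adj, fromEdgeSet_adj, Set.mem_insert_iff,
    Set.mem_singleton_iff]
  by_cases he : s(u, v) = s(b, c)
  · have huv : T.Adj u v := by rw [← mem_edgeSet, he]; exact hbc
    have h₁ : s(u, v) ≠ s(a, b) := by rw [he]; aesop
    have h₂ : s(u, v) ≠ s(c, d) := by rw [he]; aesop
    rw [show s(c, b) = s(b, c) from Sym2.eq_swap]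
    exact iff_of_true (Or.inr ⟨Or.inr (Or.inl he), huv.ne⟩) (Or.inl ⟨huv, by tauto⟩)
  · rw [show s(c, b) = s(b, c) from Sym2.eq_swap]
    tauto

lemma sup_fromEdgeSet_adj_mem (hP : ∀ x y, H.Adj x y → x ∈ P → y ∈ P) {x y : V}
    (hxy : (H ⊔ fromEdgeSet E).Adj x y) (hx : x ∈ P) (hy : y ∉ P) : s(x, y) ∈ E :=
  hxy.elim (fun h => absurd (hP x y h hx) hy) (fun h => h.1)

lemma induce_sup_fromEdgeSet_reachable {x y : V} (he : s(x, y) ∈ E) (hx : x ∈ s) (hy : y ∈ s) :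
    ((H ⊔ fromEdgeSet E).induce s).Reachable ⟨x, hx⟩ ⟨y, hy⟩ := by
  by_cases hxy : x = y
  · subst hxy; rfl
  · exact Adj.reachable (Or.inr ⟨he, hxy⟩)

lemma induce_connected_addPath_swap (hs : ((addPath H a b c d).induce s).Connected)
    (h₁ : a ∈ s → b ∈ s → c ∈ s) (h₂ : c ∈ s → d ∈ s → b ∈ s) :
    ((addPath H a c b d).induce s).Connected := by
  have hR : ∀ x y (hx : x ∈ s) (hy : y ∈ s), s(x, y) ∈ ({s(a, c), s(c, b), s(b, d)} : Set _) →
      ((addPath H a c b d).induce s).Reachable ⟨x, hx⟩ ⟨y, hy⟩ :=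
    fun x y hx hy he => induce_sup_fromEdgeSet_reachable he hx hy
  refine hs.of_forall_adj_reachable fun ⟨u, hu⟩ ⟨v, hv⟩ huv => ?_
  rcases huv with h | ⟨he, -⟩
  · exact Adj.reachable (Or.inl h)
  change s(u, v) ∈ _ at he
  -- the edge `a b` is replaced by the detour `a c b`, and `c d` by `c b d`
  simp only [Set.mem_insert_iff, Set.mem_singleton_iff] at he
  rcases he with he | he | he <;> rcases Sym2.eq_iff.1 he with ⟨rfl, rfl⟩ | ⟨rfl, rfl⟩
  · exact (hR _ _ hu (h₁ hu hv) (by simp)).trans (hR _ _ (h₁ hu hv) hv (by simp))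
  · exact (hR _ _ hv (h₁ hv hu) (by simp)).trans (hR _ _ (h₁ hv hu) hu (by simp)) |>.symm
  · exact hR _ _ hu hv (by simp [Sym2.eq_swap])
  · exact hR _ _ hu hv (by simp)
  · exact (hR _ _ hu (h₂ hu hv) (by simp)).trans (hR _ _ (h₂ hu hv) hv (by simp))
  · exact (hR _ _ hv (h₂ hv hu) (by simp)).trans (hR _ _ (h₂ hv hu) hu (by simp)) |>.symm

lemma not_induce_connected_addPath_swap (hP : ∀ x y, H.Adj x y → x ∈ P → y ∈ P) (ha : a ∈ P)
    (hb : b ∉ P) (hc : c ∉ P) (hd : d ∉ P) (has : a ∈ s) (hbs : b ∈ s) (hcs : c ∉ s) :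
    ¬((addPath H a c b d).induce s).Connected := by
  intro hs
  obtain ⟨x, -, y, hys, hxy, hx, hy⟩ := exists_adj_of_induce_connected hs has hbs ha hb
  have he := sup_fromEdgeSet_adj_mem hP hxy hx hy
  -- the only path edge leaving `P` is `a c`
  simp only [Set.mem_insert_iff, Set.mem_singleton_iff, Sym2.eq_iff] at he
  aesop

variable [Fintype V]

lemma numSubtreesIn_addPath {P : Set V} (p : V) (h₁ : a ∉ P ∨ b ∉ P) (h₂ : b ∉ P ∨ c ∉ P)
    (h₃ : c ∉ P ∨ d ∉ P) : numSubtreesIn (addPath H a b c d) P p = numSubtreesIn H P p :=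
  numSubtreesIn_sup_fromEdgeSet p (by simpa [or_imp, forall_and] using ⟨h₁, h₂, h₃⟩)

lemma ncard_subtreeSet_addPath_mem_mem_not_mem (hab : ¬H.Reachable a b)
    (hac : ¬H.Reachable a c) (had : ¬H.Reachable a d) (hbc : ¬H.Reachable b c) :
    {s ∈ subtreeSet (addPath H a b c d) | a ∈ s ∧ b ∈ s ∧ c ∉ s}.ncard =
      numSubtreesAt H a * numSubtreesAt H b := by
  have hb : b ∉ reachSet H a := hab
  have hc : c ∉ reachSet H a := hac
  have ha' : a ∉ reachSet H b := fun h => hab h.symm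
  have hc' : c ∉ reachSet H b := hbc
  have hdisj : Disjoint (reachSet H a) (reachSet H b) :=
    Set.disjoint_left.2 fun z haz hbz => hab (haz.trans hbz.symm)
  have hcut : {s ∈ subtreeSet (addPath H a b c d) | a ∈ s ∧ b ∈ s ∧ c ∉ s} =
      {s | a ∈ s ∧ b ∈ s ∧ s ⊆ reachSet H a ∪ reachSet H b ∧
        ((addPath H a b c d).induce s).Connected} := by
    ext s
    constructor
    · rintro ⟨⟨-, hs⟩, has, hbs, hcs⟩
      refine ⟨has, hbs, fun y hys => ?_, hs⟩
      by_contra hy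
      obtain ⟨x, -, z, hzs, hxz, hx, hz⟩ :=
        exists_adj_of_induce_connected hs has hys (Or.inl (Reachable.refl a)) hy
      have he := sup_fromEdgeSet_adj_mem
        (fun x y h => Or.imp (mem_reachSet_of_adj x y h) (mem_reachSet_of_adj x y h)) hxz hx hz
      -- the only path edge leaving `reachSet H a ∪ reachSet H b` is `b c`
      simp only [Set.mem_insert_iff, Set.mem_singleton_iff, Sym2.eq_iff] at he
      simp only [reachSet, Set.mem_union, Set.mem_ofPred_eq] at hx hz
      aesop
    · rintro ⟨has, hbs, hsub, hs⟩
      exact ⟨⟨⟨a, has⟩, hs⟩, has, hbs, fun hcs => (hsub hcs).elim hc hc'⟩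
  rw [hcut, ncard_connected_subset_union hdisj (Reachable.refl a) (Reachable.refl b)
    (Or.inr ⟨by simp, fun h => hab (h ▸ Reachable.refl a)⟩) ?_,
    numSubtreesIn_addPath _ (.inr hb) (.inl hb) (.inl hc),
    numSubtreesIn_addPath _ (.inl ha') (.inr hc') (.inl hc')]
  · rfl
  intro x hx y hy hxy
  have he := sup_fromEdgeSet_adj_mem mem_reachSet_of_adj hxy hx (Set.disjoint_right.1 hdisj hy)
  -- the only path edge from `reachSet H a` to `reachSet H b` is `a b`
  simp only [Set.mem_insert_iff, Set.mem_singleton_iff, Sym2.eq_iff] at he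
  simp only [reachSet, Set.mem_ofPred_eq] at hx hy
  aesop

lemma numSubtrees_addPath (hab : ¬H.Reachable a b) (hac : ¬H.Reachable a c)
    (had : ¬H.Reachable a d) (hbc : ¬H.Reachable b c) (hbd : ¬H.Reachable b d)
    (hcd : ¬H.Reachable c d) :
    numSubtrees (addPath H a b c d) =
      (subtreeSet (addPath H a b c d) ∩ subtreeSet (addPath H a c b d)).ncard +
        numSubtreesAt H a * numSubtreesAt H b + numSubtreesAt H d * numSubtreesAt H c := by
  have hdiff : subtreeSet (addPath H a b c d) \ subtreeSet (addPath H a c b d) =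
      {s ∈ subtreeSet (addPath H a b c d) | a ∈ s ∧ b ∈ s ∧ c ∉ s} ∪
        {s ∈ subtreeSet (addPath H a b c d) | d ∈ s ∧ c ∈ s ∧ b ∉ s} := by
    ext s
    simp only [Set.mem_sdiff, Set.mem_union, Set.mem_sep_iff]
    constructor
    · rintro ⟨hs, hs'⟩
      by_contra h
      exact hs' ⟨hs.1, induce_connected_addPath_swap hs.2 (by tauto) (by tauto)⟩
    · rintro (⟨hs, has, hbs, hcs⟩ | ⟨hs, hds, hcs, hbs⟩)
      · exact ⟨hs, fun h => not_induce_connected_addPath_swap mem_reachSet_of_adj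
          (Reachable.refl a) hab hac had has hbs hcs h.2⟩
      · refine ⟨hs, fun h => not_induce_connected_addPath_swap mem_reachSet_of_adj
          (Reachable.refl d) (fun h => hcd h.symm) (fun h => hbd h.symm) (fun h => had h.symm)
          hds hcs hbs ?_⟩
        rw [addPath_reverse]
        exact h.2
  have hF₂ := ncard_subtreeSet_addPath_mem_mem_not_mem (H := H) (fun h => hcd h.symm)
    (fun h => hbd h.symm) (fun h => had h.symm) (fun h => hbc h.symm)
  rw [addPath_reverse] at hF₂
  set G := addPath H a b c d
  set G' := addPath H a c b d
  calc numSubtrees G = (subtreeSet G ∩ subtreeSet G' ∪ subtreeSet G \ subtreeSet G').ncard := by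
        rw [Set.inter_union_sdiff]; rfl
    _ = _ := by
        rw [Set.ncard_union_eq Set.disjoint_sdiff_inter.symm, hdiff, Set.ncard_union_eq,
          ncard_subtreeSet_addPath_mem_mem_not_mem hab hac had hbc, hF₂, add_assoc]
        exact Set.disjoint_left.2 fun s h₁ h₂ => h₂.2.2.2 h₁.2.2.1

theorem numSubtrees_addPath_swap_sub (hab : ¬H.Reachable a b) (hac : ¬H.Reachable a c)
    (had : ¬H.Reachable a d) (hbc : ¬H.Reachable b c) (hbd : ¬H.Reachable b d)
    (hcd : ¬H.Reachable c d) :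
    (numSubtrees (addPath H a c b d) : ℤ) - numSubtrees (addPath H a b c d) =
      ((numSubtreesAt H b : ℤ) - numSubtreesAt H c) *
        ((numSubtreesAt H d : ℤ) - numSubtreesAt H a) := by
  rw [numSubtrees_addPath hab hac had hbc hbd hcd,
    numSubtrees_addPath hac hab had (fun h => hbc h.symm) hcd hbd, Set.inter_comm]
  push_cast
  ring

end AddPath

section PathInTree

variable {T : SimpleGraph V} {n k : ℕ} {x : ℕ → V}

lemma eq_of_pathEdge_eq (hinj : Set.InjOn x (Set.Icc 0 (n + 1))) {i j : ℕ} (hi : i ≤ n)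
    (hj : j ≤ n) (h : s(x i, x (i + 1)) = s(x j, x (j + 1))) : i = j := by
  have hx : ∀ {p q}, p ≤ n + 1 → q ≤ n + 1 → x p = x q → p = q := fun hp hq h =>
    hinj ⟨Nat.zero_le _, hp⟩ ⟨Nat.zero_le _, hq⟩ h
  rcases Sym2.eq_iff.1 h with ⟨h₁, -⟩ | ⟨h₁, h₂⟩
  · exact hx (by omega) (by omega) h₁
  · have := hx (by omega) (by omega) h₁
    have := hx (by omega) (by omega) h₂
    omega

lemma not_reachable_deleteEdges_pathEdge (hT : T.IsAcyclic)
    (hadj : ∀ i ≤ n, T.Adj (x i) (x (i + 1))) (hinj : Set.InjOn x (Set.Icc 0 (n + 1)))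
    {i l j : ℕ} (hil : i ≤ l) (hlj : l < j) (hj : j ≤ n + 1) :
    ¬(T.deleteEdges {s(x l, x (l + 1))}).Reachable (x i) (x j) := by
  have hpath : ∀ m ≤ n, m ≠ l → (T.deleteEdges {s(x l, x (l + 1))}).Adj (x m) (x (m + 1)) :=
    fun m hm hml =>
      (deleteEdges_adj ..).2 ⟨hadj m hm, fun h => hml (eq_of_pathEdge_eq hinj hm (by omega) h)⟩
  intro h
  -- `x i … x l` and `x (l+1) … x j` avoid the bridge `x l x (l+1)`
  refine isBridge_iff.1 (isAcyclic_iff_forall_adj_isBridge.1 hT (hadj l (by omega))) ?_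
  exact ((reachable_of_forall_adj hil fun m _ hm => hpath m (by omega) (by omega)).symm.trans
    h).trans (reachable_of_forall_adj hlj fun m hm _ => hpath m (by omega) (by omega)).symm

/-- The components of `x k, …, x (k+3)` in `pathCut T x k` are `X_{≤k}`, `X_{k+1}`, `X_{k+2}`,
`X_{≥k+3}`. -/
def pathCut (T : SimpleGraph V) (x : ℕ → V) (k : ℕ) : SimpleGraph V :=
  T.deleteEdges {s(x k, x (k + 1)), s(x (k + 1), x (k + 2)), s(x (k + 2), x (k + 3))}

lemma addPath_pathCut (hadj : ∀ i ≤ n, T.Adj (x i) (x (i + 1))) (hk : k + 2 ≤ n) :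
    addPath (pathCut T x k) (x k) (x (k + 1)) (x (k + 2)) (x (k + 3)) = T :=
  addPath_deleteEdges (hadj k (by omega)) (hadj (k + 1) (by omega)) (hadj (k + 2) hk)

lemma not_mem_reachSet_pathCut (hT : T.IsAcyclic) (hadj : ∀ i ≤ n, T.Adj (x i) (x (i + 1)))
    (hinj : Set.InjOn x (Set.Icc 0 (n + 1))) {i j : ℕ} (hi : i ≤ n + 1) (hj : j ≤ n + 1)
    (hij : i ≠ j) (hmin : min i j ≤ k + 2) (hmax : k + 1 ≤ max i j) :
    x j ∉ reachSet (pathCut T x k) (x i) := by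
  have hcut : ∀ {p q}, p < q → q ≤ n + 1 → p ≤ k + 2 → k + 1 ≤ q →
      ¬(pathCut T x k).Reachable (x p) (x q) := by
    intro p q hpq hq hp hq' h
    have hsub : {s(x (max p k), x (max p k + 1))} ⊆
        ({s(x k, x (k + 1)), s(x (k + 1), x (k + 2)), s(x (k + 2), x (k + 3))} : Set _) := by
      obtain h | h | h : max p k = k ∨ max p k = k + 1 ∨ max p k = k + 2 := by omega
      all_goals simp [h]
    exact not_reachable_deleteEdges_pathEdge hT hadj hinj (le_max_left _ _) (by omega) hq
      (h.mono (deleteEdges_anti hsub))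
  rcases Nat.lt_or_gt_of_ne hij with h | h
  · exact hcut h hj (by omega) (by omega)
  · exact fun hr => hcut h hi (by omega) (by omega) hr.symm

variable [Fintype V]

lemma numSubtreesIn_reachSet_pathCut (hT : T.IsAcyclic)
    (hadj : ∀ i ≤ n, T.Adj (x i) (x (i + 1))) (hinj : Set.InjOn x (Set.Icc 0 (n + 1)))
    (hk : k + 2 ≤ n) {m : ℕ} (hkm : k ≤ m) (hmk : m ≤ k + 3) :
    numSubtreesIn T (reachSet (pathCut T x k) (x m)) (x m) =
      numSubtreesAt (pathCut T x k) (x m) := by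
  have hnot : ∀ i, k ≤ i → i ≤ k + 2 →
      x i ∉ reachSet (pathCut T x k) (x m) ∨ x (i + 1) ∉ reachSet (pathCut T x k) (x m) := by
    intro i h₁ h₂
    by_cases him : i = m
    · exact .inr (not_mem_reachSet_pathCut hT hadj hinj (by omega) (by omega) (by omega)
        (by omega) (by omega))
    · exact .inl (not_mem_reachSet_pathCut hT hadj hinj (by omega) (by omega) (Ne.symm him)
        (by omega) (by omega))
  have h := numSubtreesIn_addPath (H := pathCut T x k) (a := x k) (b := x (k + 1))
    (c := x (k + 2)) (d := x (k + 3)) (x m) (hnot k le_rfl (by omega))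
    (hnot (k + 1) (by omega) (by omega)) (hnot (k + 2) (by omega) le_rfl)
  rwa [addPath_pathCut hadj hk] at h

lemma numSubtreesIn_deleteEdges_pathEdge_left (hT : T.IsAcyclic)
    (hadj : ∀ i ≤ n, T.Adj (x i) (x (i + 1))) (hinj : Set.InjOn x (Set.Icc 0 (n + 1)))
    (hk : k + 2 ≤ n) :
    numSubtreesIn T (reachSet (T.deleteEdges {s(x k, x (k + 1))}) (x k)) (x k) =
      numSubtreesAt (pathCut T x k) (x k) := by
  have hc := not_reachable_deleteEdges_pathEdge hT hadj hinj le_rfl (by omega : k < k + 2)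
    (by omega)
  rw [← numSubtreesIn_reachSet_pathCut hT hadj hinj hk le_rfl (by omega), pathCut,
    Set.insert_eq, ← deleteEdges_deleteEdges, reachSet_deleteEdges (G := T.deleteEdges _)]
  rintro e (rfl | rfl)
  exacts [⟨_, Sym2.mem_mk_right _ _, hc⟩, ⟨_, Sym2.mem_mk_left _ _, hc⟩]

lemma numSubtreesIn_deleteEdges_pathEdge_right (hT : T.IsAcyclic)
    (hadj : ∀ i ≤ n, T.Adj (x i) (x (i + 1))) (hinj : Set.InjOn x (Set.Icc 0 (n + 1)))
    (hk : k + 2 ≤ n) :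
    numSubtreesIn T (reachSet (T.deleteEdges {s(x (k + 2), x (k + 3))}) (x (k + 3))) (x (k + 3)) =
      numSubtreesAt (pathCut T x k) (x (k + 3)) := by
  have hb : ¬(T.deleteEdges {s(x (k + 2), x (k + 3))}).Reachable (x (k + 3)) (x (k + 1)) :=
    fun h => not_reachable_deleteEdges_pathEdge hT hadj hinj (by omega : k + 1 ≤ k + 2)
      (by omega) (by omega) h.symm
  have hE : ({s(x k, x (k + 1)), s(x (k + 1), x (k + 2)), s(x (k + 2), x (k + 3))} : Set _) =
      {s(x (k + 2), x (k + 3))} ∪ {s(x k, x (k + 1)), s(x (k + 1), x (k + 2))} := by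
    ext
    simp only [Set.mem_insert_iff, Set.mem_singleton_iff, Set.mem_union]
    tauto
  rw [← numSubtreesIn_reachSet_pathCut hT hadj hinj hk (by omega) le_rfl, pathCut, hE,
    ← deleteEdges_deleteEdges, reachSet_deleteEdges (G := T.deleteEdges _)]
  rintro e (rfl | rfl)
  exacts [⟨_, Sym2.mem_mk_right _ _, hb⟩, ⟨_, Sym2.mem_mk_left _ _, hb⟩]

lemma numSubtreesIn_deleteEdges_pathEdges (hT : T.IsAcyclic)
    (hadj : ∀ i ≤ n, T.Adj (x i) (x (i + 1))) (hinj : Set.InjOn x (Set.Icc 0 (n + 1)))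
    (hk : k + 2 ≤ n) {m : ℕ} (hkm : k + 1 ≤ m) (hmk : m ≤ k + 2) :
    numSubtreesIn T (reachSet (T.deleteEdges {e | ∃ i ≤ n, e = s(x i, x (i + 1))}) (x m)) (x m) =
      numSubtreesAt (pathCut T x k) (x m) := by
  have hsub : {s(x k, x (k + 1)), s(x (k + 1), x (k + 2)), s(x (k + 2), x (k + 3))} ⊆
      {e | ∃ i ≤ n, e = s(x i, x (i + 1))} := by
    rintro e (rfl | rfl | rfl)
    exacts [⟨k, by omega, rfl⟩, ⟨k + 1, by omega, rfl⟩, ⟨k + 2, hk, rfl⟩]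
  have hnot : ∀ j ≤ n + 1, j ≠ m → ¬(pathCut T x k).Reachable (x m) (x j) := fun j hj hjm =>
    not_mem_reachSet_pathCut hT hadj hinj (by omega) hj (Ne.symm hjm) (by omega) (by omega)
  rw [← numSubtreesIn_reachSet_pathCut hT hadj hinj hk (by omega) (by omega),
    ← Set.union_eq_right.2 hsub, ← deleteEdges_deleteEdges, ← pathCut, reachSet_deleteEdges]
  rintro _ ⟨i, hi, rfl⟩
  by_cases him : i = m
  · exact ⟨_, Sym2.mem_mk_right _ _, hnot (i + 1) (by omega) (by omega)⟩
  · exact ⟨_, Sym2.mem_mk_left _ _, hnot i (by omega) him⟩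

lemma numSubtreesAt_eq_one {H : SimpleGraph V} {v w : V}
    [Fintype (T.neighborSet v)] (hv : T.degree v = 1) (hvw : T.Adj v w)
    (hH : H ≤ T.deleteEdges {s(v, w)}) : numSubtreesAt H v = 1 := by
  obtain ⟨w', -, huniq⟩ := degree_eq_one_iff_existsUnique_adj.1 hv
  have hiso : ∀ y, ¬H.Adj v y := fun y hy => by
    obtain ⟨hTy, hy⟩ := (deleteEdges_adj ..).1 (hH hy)
    exact hy (by rw [huniq y hTy, huniq w hvw]; rfl)
  rw [numSubtreesAt, reachSet_eq_singleton hiso, numSubtreesIn_singleton]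

theorem numSubtrees_componentSwitch_sub (hT : T.IsAcyclic)
    (hadj : ∀ i ≤ n, T.Adj (x i) (x (i + 1))) (hinj : Set.InjOn x (Set.Icc 0 (n + 1)))
    (hk : k + 2 ≤ n) :
    (numSubtrees (T.deleteEdges {s(x k, x (k + 1)), s(x (k + 2), x (k + 3))} ⊔
        fromEdgeSet {s(x k, x (k + 2)), s(x (k + 1), x (k + 3))}) : ℤ) - numSubtrees T =
      ((numSubtreesAt (pathCut T x k) (x (k + 1)) : ℤ) -
          numSubtreesAt (pathCut T x k) (x (k + 2))) *
        ((numSubtreesAt (pathCut T x k) (x (k + 3)) : ℤ) -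
          numSubtreesAt (pathCut T x k) (x k)) := by
  have hsep : ∀ i j, k ≤ i → i < j → j ≤ k + 3 → ¬(pathCut T x k).Reachable (x i) (x j) :=
    fun i j h₁ h₂ h₃ => not_mem_reachSet_pathCut hT hadj hinj (by omega) (by omega) (by omega)
      (by omega) (by omega)
  have hne : ∀ i j, k ≤ i → i < j → j ≤ k + 3 → x i ≠ x j :=
    fun i j h₁ h₂ h₃ h => hsep i j h₁ h₂ h₃ (h ▸ Reachable.refl _)
  have key := numSubtrees_addPath_swap_sub (H := pathCut T x k)
    (hsep k (k + 1) le_rfl (by omega) (by omega)) (hsep k (k + 2) le_rfl (by omega) (by omega))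
    (hsep k (k + 3) le_rfl (by omega) (by omega))
    (hsep (k + 1) (k + 2) (by omega) (by omega) (by omega))
    (hsep (k + 1) (k + 3) (by omega) (by omega) (by omega))
    (hsep (k + 2) (k + 3) (by omega) (by omega) le_rfl)
  have hS : addPath (pathCut T x k) (x k) (x (k + 2)) (x (k + 1)) (x (k + 3)) =
      T.deleteEdges {s(x k, x (k + 1)), s(x (k + 2), x (k + 3))} ⊔
        fromEdgeSet {s(x k, x (k + 2)), s(x (k + 1), x (k + 3))} :=
    addPath_swap_deleteEdges (hadj (k + 1) (by omega)) (hne k (k + 2) le_rfl (by omega) (by omega))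
      (hne (k + 1) (k + 3) (by omega) (by omega) le_rfl)
  rwa [addPath_pathCut hadj hk, hS] at key

end PathInTree

end SimpleGraph

theorem component_switch_subtrees_general {V : Type*} [Fintype V] (T : SimpleGraph V)
    [DecidableRel T.Adj] (hT : T.IsTree) (n : ℕ) (x : ℕ → V)
    (hadj : ∀ i ≤ n, T.Adj (x i) (x (i + 1)))
    (hinj : Set.InjOn x (Set.Icc 0 (n + 1)))
    (hleaf₁ : T.degree (x 0) = 1) (hleaf₂ : T.degree (x (n + 1)) = 1)
    (C Cle Cge : ℕ → ℕ)
    (hC : ∀ k ∈ Finset.Icc 1 n, C k =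
      numSubtreesIn T
        (reachSet (T.deleteEdges {e | ∃ i ≤ n, e = s(x i, x (i + 1))}) (x k)) (x k))
    (hCle0 : Cle 0 = 1)
    (hCle : ∀ k ∈ Finset.Icc 1 n, Cle k =
      numSubtreesIn T (reachSet (T.deleteEdges {s(x k, x (k + 1))}) (x k)) (x k))
    (hCgeTop : Cge (n + 1) = 1)
    (hCge : ∀ k ∈ Finset.Icc 1 n, Cge k =
      numSubtreesIn T (reachSet (T.deleteEdges {s(x (k - 1), x k)}) (x k)) (x k))
    (k : ℕ) (hk : k ∈ Finset.Icc 1 (n - 1))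
    (h₁ : Cle (k - 1) < Cge (k + 2)) (h₂ : C (k + 1) < C k)
    (S : SimpleGraph V)
    (hS : S = T.deleteEdges {s(x (k - 1), x k), s(x (k + 1), x (k + 2))} ⊔
      SimpleGraph.fromEdgeSet {s(x (k - 1), x (k + 1)), s(x k, x (k + 2))}) :
    numSubtrees T < numSubtrees S ∧
      (numSubtrees S : ℤ) - (numSubtrees T : ℤ) =
        ((C k : ℤ) - (C (k + 1) : ℤ)) * ((Cge (k + 2) : ℤ) - (Cle (k - 1) : ℤ)) := by
  obtain ⟨k, rfl⟩ : ∃ k', k = k' + 1 := ⟨k - 1, by simp only [Finset.mem_Icc] at hk; omega⟩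
  have hk : k + 2 ≤ n := by simp only [Finset.mem_Icc] at hk; omega
  simp only [Nat.add_sub_cancel, show k + 1 + 1 = k + 2 from rfl,
    show k + 1 + 2 = k + 3 from rfl] at h₁ h₂ hS ⊢
  have hA : Cle k = numSubtreesAt (pathCut T x k) (x k) := by
    rcases Nat.eq_zero_or_pos k with rfl | hk0
    · rw [hCle0, numSubtreesAt_eq_one (H := pathCut T x 0) hleaf₁ (hadj 0 (by omega))
        (deleteEdges_anti (by simp))]
    · rw [hCle k (Finset.mem_Icc.2 ⟨hk0, by omega⟩),
        numSubtreesIn_deleteEdges_pathEdge_left hT.2 hadj hinj hk]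
  have hBC : ∀ m, k + 1 ≤ m → m ≤ k + 2 → C m = numSubtreesAt (pathCut T x k) (x m) := by
    intro m h h'
    rw [hC m (Finset.mem_Icc.2 ⟨by omega, by omega⟩),
      numSubtreesIn_deleteEdges_pathEdges hT.2 hadj hinj hk h h']
  have hD : Cge (k + 3) = numSubtreesAt (pathCut T x k) (x (k + 3)) := by
    rcases Nat.lt_or_ge n (k + 3) with hn | hn
    · obtain rfl : n = k + 2 := by omega
      rw [hCgeTop, numSubtreesAt_eq_one (H := pathCut T x k) hleaf₂ (hadj (k + 2) le_rfl).symm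
        (deleteEdges_anti (by simp [Sym2.eq_swap]))]
    · rw [hCge (k + 3) (Finset.mem_Icc.2 ⟨by omega, hn⟩), show k + 3 - 1 = k + 2 from rfl,
        numSubtreesIn_deleteEdges_pathEdge_right hT.2 hadj hinj hk]
  have key := numSubtrees_componentSwitch_sub hT.2 hadj hinj hk
  rw [← hS, ← hA, ← hBC (k + 1) le_rfl (by omega), ← hBC (k + 2) (by omega) le_rfl, ← hD] at key
  have hpos : 0 < ((C (k + 1) : ℤ) - C (k + 2)) * ((Cge (k + 3) : ℤ) - Cle k) :=
    mul_pos (sub_pos.2 (by exact_mod_cast h₂)) (sub_pos.2 (by exact_mod_cast h₁))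
  exact ⟨by linarith [key ▸ hpos], key⟩

/-- Lemma 2, `lemma-component-switch`. Let `T` be a tree with a
path `v₁ x₁ … xₙ v₂` between leaves (`x 0 = v₁`, `x (n+1) = v₂`), `C k = f_{x_k}(X_k)`,
`Cle k = f_{x_k}(X_{≤k})` (with `Cle 0 = 1`) and `Cge k = f_{x_k}(X_{≥k})` (with
`Cge (n+1) = 1`).  If `Cle (k-1) < Cge (k+2)` and `C (k+1) < C k`, then the tree `S`
obtained from `T` by the component-switch interchanging `X_k` and `X_{k+1}`
(deleting the edges `x_{k-1}x_k`, `x_{k+1}x_{k+2}` and adding `x_{k-1}x_{k+1}`,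
`x_k x_{k+2}`) satisfies
`f(S) - f(T) = (C k - C (k+1)) (Cge (k+2) - Cle (k-1)) > 0`. -/
theorem component_switch_subtrees {V : Type*} [Fintype V] (T : SimpleGraph V)
    [DecidableRel T.Adj] (hT : T.IsTree) (n : ℕ) (hn : 2 ≤ n) (x : ℕ → V)
    (hadj : ∀ i ≤ n, T.Adj (x i) (x (i + 1)))
    (hinj : Set.InjOn x (Set.Icc 0 (n + 1)))
    (hleaf₁ : T.degree (x 0) = 1) (hleaf₂ : T.degree (x (n + 1)) = 1)
    (C Cle Cge : ℕ → ℕ)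
    (hC : ∀ k ∈ Finset.Icc 1 n, C k =
      numSubtreesIn T
        (reachSet (T.deleteEdges {e | ∃ i ≤ n, e = s(x i, x (i + 1))}) (x k)) (x k))
    (hCle0 : Cle 0 = 1)
    (hCle : ∀ k ∈ Finset.Icc 1 n, Cle k =
      numSubtreesIn T (reachSet (T.deleteEdges {s(x k, x (k + 1))}) (x k)) (x k))
    (hCgeTop : Cge (n + 1) = 1)
    (hCge : ∀ k ∈ Finset.Icc 1 n, Cge k =
      numSubtreesIn T (reachSet (T.deleteEdges {s(x (k - 1), x k)}) (x k)) (x k))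
    (k : ℕ) (hk : k ∈ Finset.Icc 1 (n - 1))
    (h₁ : Cle (k - 1) < Cge (k + 2)) (h₂ : C (k + 1) < C k)
    (S : SimpleGraph V)
    (hS : S = T.deleteEdges {s(x (k - 1), x k), s(x (k + 1), x (k + 2))} ⊔
      SimpleGraph.fromEdgeSet {s(x (k - 1), x (k + 1)), s(x k, x (k + 2))}) :
    numSubtrees T < numSubtrees S ∧
      (numSubtrees S : ℤ) - (numSubtrees T : ℤ) =
        ((C k : ℤ) - (C (k + 1) : ℤ)) * ((Cge (k + 2) : ℤ) - (Cle (k - 1) : ℤ)) :=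
  component_switch_subtrees_general T hT n x hadj hinj hleaf₁ hleaf₂ C Cle Cge hC hCle0 hCle hCgeTop
    hCge k hk h₁ h₂ S hS
end

section
/- Let n ≥ 2 and let C_1 ≥ D_1 ≥ C_2 ≥ D_2 ≥ ... ≥ C_{n-1} ≥ D_{n-1} be positive real numbers. Define C = Σ_{i=1}^{n-1} Π_{j=1}^{i} C_{n-j} + (Π_{m=1}^{n-1} C_m) · Σ_{i=1}^{n-1} Π_{j=1}^{i} D_j and D = Σ_{i=1}^{n-1} Π_{j=1}^{i} D_{n-j} + (Π_{m=1}^{n-1} D_m) · Σ_{i=1}^{n-1} Π_{j=1}^{i} C_j. Then C ≥ D. -/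
/-! Both sides compare term by term. The first sums do since `D ≤ C` pointwise. In the second,
splitting `∏_{m ≤ n-1}` at `i` leaves the common factor `∏_{j ≤ i} C j · ∏_{j ≤ i} D j` on both
sides, and what remains is `∏_{i < m ≤ n-1} D m ≤ ∏_{i < m ≤ n-1} C m`. -/

open Finset

theorem Finset.prod_mul_prod_le_prod_mul_prod_of_subset {ι R : Type*} [CommSemiring R]
    [PartialOrder R] [IsOrderedRing R] {s t : Finset ι} {c d : ι → R} (hst : s ⊆ t)
    (hd : ∀ i ∈ t, 0 ≤ d i) (hdc : ∀ i ∈ t, d i ≤ c i) :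
    (∏ i ∈ t, d i) * ∏ i ∈ s, c i ≤ (∏ i ∈ t, c i) * ∏ i ∈ s, d i := by
  classical
  have hrest : ∏ i ∈ t \ s, d i ≤ ∏ i ∈ t \ s, c i :=
    prod_le_prod (fun i hi => hd i (sdiff_subset hi)) fun i hi => hdc i (sdiff_subset hi)
  have hcommon : 0 ≤ (∏ i ∈ s, d i) * ∏ i ∈ s, c i :=
    mul_nonneg (prod_nonneg fun i hi => hd i (hst hi))
      (prod_nonneg fun i hi => (hd i (hst hi)).trans (hdc i (hst hi)))
  rw [← prod_sdiff hst, ← prod_sdiff (f := c) hst]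
  calc (∏ i ∈ t \ s, d i) * (∏ i ∈ s, d i) * ∏ i ∈ s, c i
      = (∏ i ∈ t \ s, d i) * ((∏ i ∈ s, d i) * ∏ i ∈ s, c i) := by ring
    _ ≤ (∏ i ∈ t \ s, c i) * ((∏ i ∈ s, d i) * ∏ i ∈ s, c i) :=
        mul_le_mul_of_nonneg_right hrest hcommon
    _ = (∏ i ∈ t \ s, c i) * (∏ i ∈ s, c i) * ∏ i ∈ s, d i := by ring

theorem subtree_lemma_new_first_general (n : ℕ) (C D : ℕ → ℝ)
    (hDpos : ∀ i ∈ Finset.Icc 1 (n - 1), 0 < D i)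
    (hDleC : ∀ i ∈ Finset.Icc 1 (n - 1), D i ≤ C i) :
    (∑ i ∈ Finset.Icc 1 (n - 1), ∏ j ∈ Finset.Icc 1 i, D (n - j)) +
        (∏ m ∈ Finset.Icc 1 (n - 1), D m) *
          (∑ i ∈ Finset.Icc 1 (n - 1), ∏ j ∈ Finset.Icc 1 i, C j) ≤
      (∑ i ∈ Finset.Icc 1 (n - 1), ∏ j ∈ Finset.Icc 1 i, C (n - j)) +
        (∏ m ∈ Finset.Icc 1 (n - 1), C m) *
          (∑ i ∈ Finset.Icc 1 (n - 1), ∏ j ∈ Finset.Icc 1 i, D j) := by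
  have hreflect : ∀ i ∈ Icc 1 (n - 1), ∀ j ∈ Icc 1 i, n - j ∈ Icc 1 (n - 1) := by
    simp only [mem_Icc]
    omega
  refine add_le_add (sum_le_sum fun i hi => ?_) ?_
  · exact prod_le_prod (fun j hj => (hDpos _ (hreflect i hi j hj)).le)
      fun j hj => hDleC _ (hreflect i hi j hj)
  · rw [mul_sum, mul_sum]
    exact sum_le_sum fun i hi =>
      prod_mul_prod_le_prod_mul_prod_of_subset (Icc_subset_Icc_right (mem_Icc.1 hi).2)
        (fun j hj => (hDpos j hj).le) hDleC

/-- Lemma `lemma-new`, first part. Let `n ≥ 2` and let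
`C 1 ≥ D 1 ≥ C 2 ≥ D 2 ≥ … ≥ C (n-1) ≥ D (n-1)` be positive reals. Define
`C = Σ_{i=1}^{n-1} Π_{j=1}^{i} C (n-j) + (Π_{m=1}^{n-1} C m) · Σ_{i=1}^{n-1} Π_{j=1}^{i} D j`
and
`D = Σ_{i=1}^{n-1} Π_{j=1}^{i} D (n-j) + (Π_{m=1}^{n-1} D m) · Σ_{i=1}^{n-1} Π_{j=1}^{i} C j`.
Then `C ≥ D`. -/
theorem subtree_lemma_new_first (n : ℕ) (hn : 2 ≤ n) (C D : ℕ → ℝ)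
    (hCpos : ∀ i ∈ Finset.Icc 1 (n - 1), 0 < C i)
    (hDpos : ∀ i ∈ Finset.Icc 1 (n - 1), 0 < D i)
    (hDleC : ∀ i ∈ Finset.Icc 1 (n - 1), D i ≤ C i)
    (hCleD : ∀ i ∈ Finset.Icc 1 (n - 2), C (i + 1) ≤ D i) :
    (∑ i ∈ Finset.Icc 1 (n - 1), ∏ j ∈ Finset.Icc 1 i, D (n - j)) +
        (∏ m ∈ Finset.Icc 1 (n - 1), D m) *
          (∑ i ∈ Finset.Icc 1 (n - 1), ∏ j ∈ Finset.Icc 1 i, C j) ≤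
      (∑ i ∈ Finset.Icc 1 (n - 1), ∏ j ∈ Finset.Icc 1 i, C (n - j)) +
        (∏ m ∈ Finset.Icc 1 (n - 1), C m) *
          (∑ i ∈ Finset.Icc 1 (n - 1), ∏ j ∈ Finset.Icc 1 i, D j) :=
  subtree_lemma_new_first_general n C D hDpos hDleC
end

section
/- Let k ≥ 2 and let C_1 ≥ D_1 ≥ C_2 ≥ D_2 ≥ ... ≥ C_{k-1} ≥ D_{k-1} ≥ C_k be positive real numbers. Define C' = Σ_{i=0}^{k-1} Π_{j=0}^{i} C_{k-j} + (Π_{m=1}^{k} C_m) · Σ_{i=1}^{k-1} Π_{j=1}^{i} D_j and D' = Σ_{i=1}^{k-1} Π_{j=1}^{i} D_{k-j} + (Π_{m=1}^{k-1} D_m) · Σ_{i=1}^{k} Π_{j=1}^{i} C_j. Then D' ≥ C'. -/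
/-- Lemma `lemma-new`, second part. Let `k ≥ 2` and let
`C 1 ≥ D 1 ≥ C 2 ≥ … ≥ C (k-1) ≥ D (k-1) ≥ C k` be positive reals. Define
`C' = Σ_{i=0}^{k-1} Π_{j=0}^{i} C (k-j) + (Π_{m=1}^{k} C m) · Σ_{i=1}^{k-1} Π_{j=1}^{i} D j`
and
`D' = Σ_{i=1}^{k-1} Π_{j=1}^{i} D (k-j) + (Π_{m=1}^{k-1} D m) · Σ_{i=1}^{k} Π_{j=1}^{i} C j`.
Then `D' ≥ C'`. -/
theorem subtree_lemma_new_second (k : ℕ) (hk : 2 ≤ k) (C D : ℕ → ℝ)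
    (hCpos : ∀ i ∈ Finset.Icc 1 k, 0 < C i)
    (hDpos : ∀ i ∈ Finset.Icc 1 (k - 1), 0 < D i)
    (hDleC : ∀ i ∈ Finset.Icc 1 (k - 1), D i ≤ C i)
    (hCleD : ∀ i ∈ Finset.Icc 1 (k - 1), C (i + 1) ≤ D i) :
    (∑ i ∈ Finset.range k, ∏ j ∈ Finset.range (i + 1), C (k - j)) +
        (∏ m ∈ Finset.Icc 1 k, C m) *
          (∑ i ∈ Finset.Icc 1 (k - 1), ∏ j ∈ Finset.Icc 1 i, D j) ≤
      (∑ i ∈ Finset.Icc 1 (k - 1), ∏ j ∈ Finset.Icc 1 i, D (k - j)) +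
        (∏ m ∈ Finset.Icc 1 (k - 1), D m) *
          (∑ i ∈ Finset.Icc 1 k, ∏ j ∈ Finset.Icc 1 i, C j) := by
  obtain ⟨n, rfl⟩ : ∃ n, k = n + 1 := ⟨k - 1, by omega⟩
  have hn : 1 ≤ n := by omega
  -- clean hypotheses
  have hC : ∀ i, 1 ≤ i → i ≤ n + 1 → 0 < C i := fun i h1 h2 =>
    hCpos i (Finset.mem_Icc.mpr ⟨h1, h2⟩)
  have hD : ∀ i, 1 ≤ i → i ≤ n → 0 < D i := fun i h1 h2 =>
    hDpos i (Finset.mem_Icc.mpr ⟨h1, by omega⟩)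
  have hCD : ∀ i, 1 ≤ i → i ≤ n → C (i + 1) ≤ D i := fun i h1 h2 =>
    hCleD i (Finset.mem_Icc.mpr ⟨h1, by omega⟩)
  simp only [Nat.add_sub_cancel]
  simp only [← Finset.Ico_add_one_right_eq_Icc, Finset.sum_Ico_eq_sum_range,
    Finset.prod_Ico_eq_prod_range, Nat.succ_sub_one, Nat.add_sub_cancel]
  rw [Finset.sum_range_succ]   -- split LHS first sum at top
  rw [Finset.sum_range_succ']  -- split RHS2 inner sum at bottom
  have h1 : ∑ x ∈ Finset.range n, ∏ j ∈ Finset.range (x + 1), C (n + 1 - j) ≤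
      ∑ i ∈ Finset.range n, ∏ j ∈ Finset.range (1 + i), D (n + 1 - (1 + j)) := by
    apply Finset.sum_le_sum
    intro i hi
    rw [Finset.mem_range] at hi
    rw [show 1 + i = i + 1 by omega]
    apply Finset.prod_le_prod
    · intro j hj
      rw [Finset.mem_range] at hj
      exact le_of_lt (hC _ (by omega) (by omega))
    · intro j hj
      rw [Finset.mem_range] at hj
      have := hCD (n - j) (by omega) (by omega)
      rw [show n - j + 1 = n + 1 - j by omega] at this
      rw [show n + 1 - (1 + j) = n - j by omega]
      exact this
  have hAn : ∏ j ∈ Finset.range (n + 1), C (n + 1 - j) = ∏ j ∈ Finset.range (n + 1), C (1 + j) := by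
    have hrefl := Finset.prod_range_reflect (fun m => C (m + 1)) (n + 1)
    simp only [Nat.add_sub_cancel] at hrefl
    calc ∏ j ∈ Finset.range (n + 1), C (n + 1 - j)
        = ∏ j ∈ Finset.range (n + 1), C (n - j + 1) := by
          refine Finset.prod_congr rfl fun j hj => ?_
          rw [Finset.mem_range] at hj
          congr 1
          omega
      _ = ∏ j ∈ Finset.range (n + 1), C (j + 1) := hrefl
      _ = ∏ j ∈ Finset.range (n + 1), C (1 + j) :=
          Finset.prod_congr rfl fun j _ => by rw [Nat.add_comm]
  have h2 : ∏ j ∈ Finset.range (n + 1), C (n + 1 - j) ≤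
      (∏ j ∈ Finset.range n, D (1 + j)) * C 1 := by
    rw [hAn, Finset.prod_range_succ']
    simp only [Nat.add_comm 1 0]
    apply mul_le_mul_of_nonneg_right _ (le_of_lt (hC 1 le_rfl (by omega)))
    apply Finset.prod_le_prod
    · intro j hj
      rw [Finset.mem_range] at hj
      exact le_of_lt (hC _ (by omega) (by omega))
    · intro j hj
      rw [Finset.mem_range] at hj
      exact hCD (1 + j) (by omega) (by omega)
  have h3 : ∀ i ∈ Finset.range n,
      (∏ m ∈ Finset.range (n + 1), C (1 + m)) * (∏ j ∈ Finset.range (1 + i), D (1 + j)) ≤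
      (∏ m ∈ Finset.range n, D (1 + m)) * (∏ j ∈ Finset.range (1 + (i + 1)), C (1 + j)) := by
    intro i hi
    rw [Finset.mem_range] at hi
    have hPC : (∏ m ∈ Finset.range (i + 2), C (1 + m)) *
        (∏ m ∈ Finset.Ico (i + 2) (n + 1), C (1 + m)) =
        ∏ m ∈ Finset.range (n + 1), C (1 + m) :=
      Finset.prod_range_mul_prod_Ico _ (by omega)
    have hQD : (∏ m ∈ Finset.range (i + 1), D (1 + m)) *
        (∏ m ∈ Finset.Ico (i + 1) n, D (1 + m)) =
        ∏ m ∈ Finset.range n, D (1 + m) :=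
      Finset.prod_range_mul_prod_Ico _ (by omega)
    have key : (∏ m ∈ Finset.Ico (i + 2) (n + 1), C (1 + m)) ≤
        ∏ m ∈ Finset.Ico (i + 1) n, D (1 + m) := by
      rw [Finset.prod_Ico_eq_prod_range, Finset.prod_Ico_eq_prod_range]
      rw [show n + 1 - (i + 2) = n - (i + 1) by omega]
      apply Finset.prod_le_prod
      · intro j hj
        rw [Finset.mem_range] at hj
        exact le_of_lt (hC _ (by omega) (by omega))
      · intro j hj
        rw [Finset.mem_range] at hj
        have := hCD (1 + (i + 1 + j)) (by omega) (by omega)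
        rw [show 1 + (i + 2 + j) = 1 + (i + 1 + j) + 1 by omega]
        exact this
    have hP2pos : (0:ℝ) < ∏ m ∈ Finset.range (i + 2), C (1 + m) := by
      refine Finset.prod_pos fun m hm => ?_
      rw [Finset.mem_range] at hm
      exact hC _ (by omega) (by omega)
    have hQ1pos : (0:ℝ) < ∏ m ∈ Finset.range (i + 1), D (1 + m) := by
      refine Finset.prod_pos fun m hm => ?_
      rw [Finset.mem_range] at hm
      exact hD _ (by omega) (by omega)
    have hP2eq : ∏ j ∈ Finset.range (1 + (i + 1)), C (1 + j) =
        ∏ j ∈ Finset.range (i + 2), C (1 + j) := by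
      rw [show 1 + (i + 1) = i + 2 by omega]
    have hQ1eq : ∏ j ∈ Finset.range (1 + i), D (1 + j) =
        ∏ j ∈ Finset.range (i + 1), D (1 + j) := by
      rw [Nat.add_comm 1 i]
    rw [hP2eq, hQ1eq, ← hPC, ← hQD]
    have hCico : (0:ℝ) ≤ ∏ m ∈ Finset.Ico (i + 2) (n + 1), C (1 + m) := by
      refine le_of_lt (Finset.prod_pos fun m hm => ?_)
      rw [Finset.mem_Ico] at hm
      exact hC _ (by omega) (by omega)
    nlinarith [mul_le_mul_of_nonneg_left key (le_of_lt hP2pos),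
      mul_le_mul_of_nonneg_left
        (mul_le_mul_of_nonneg_left key (le_of_lt hP2pos)) (le_of_lt hQ1pos)]
  have hsum3 : (∏ m ∈ Finset.range (n + 1), C (1 + m)) *
      (∑ i ∈ Finset.range n, ∏ j ∈ Finset.range (1 + i), D (1 + j)) ≤
      (∏ m ∈ Finset.range n, D (1 + m)) *
      (∑ i ∈ Finset.range n, ∏ j ∈ Finset.range (1 + (i + 1)), C (1 + j)) := by
    rw [Finset.mul_sum, Finset.mul_sum]
    exact Finset.sum_le_sum h3
  rw [hAn] at h2
  rw [hAn]
  simp only [Nat.zero_add, Finset.prod_range_one, Nat.add_zero] at *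
  rw [mul_add]
  linarith
end

section
/- Every tree on n vertices has at least n(n+1)/2 subtrees, and this bound is attained by the path: the number of subtrees of the path P_n is exactly f(P_n) = n(n+1)/2. -/
open SimpleGraph

section Aux

open SimpleGraph Walk

variable {V : Type*} {G : SimpleGraph V}

/-- In an acyclic graph, two paths whose support sets coincide have the same
(unordered) endpoints. -/
lemma path_support_endpoints (hA : G.IsAcyclic) {u v u' v' : V}
    (p : G.Walk u v) (hp : p.IsPath) (q : G.Walk u' v') (hq : q.IsPath)
    (hs : ∀ x, x ∈ p.support ↔ x ∈ q.support) :
    (u = u' ∧ v = v') ∨ (u = v' ∧ v = u') := by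
  classical
  have hlen : p.length = q.length := by
    have h1 : List.Subperm p.support q.support :=
      List.subperm_of_subset hp.support_nodup (fun x hx => (hs x).1 hx)
    have h2 : List.Subperm q.support p.support :=
      List.subperm_of_subset hq.support_nodup (fun x hx => (hs x).2 hx)
    have := le_antisymm h1.length_le h2.length_le
    rw [Walk.length_support, Walk.length_support] at this
    omega
  have hu' : u' ∈ p.support := (hs u').2 q.start_mem_support
  have hlensum : (p.takeUntil u' hu').length + (p.dropUntil u' hu').length = p.length := by
    rw [← Walk.length_append, Walk.take_spec]
  have hv' : v' ∈ p.support := (hs v').2 q.end_mem_support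
  rw [← p.take_spec hu', Walk.mem_support_append_iff] at hv'
  rcases hv' with hv1 | hv2
  · -- v' lies on the segment from u to u'
    right
    have hr : ((p.takeUntil u' hu').dropUntil v' hv1).reverse.IsPath :=
      ((hp.takeUntil hu').dropUntil hv1).reverse
    have hrq : ((p.takeUntil u' hu').dropUntil v' hv1).reverse = q :=
      congrArg Subtype.val (hA.path_unique ⟨_, hr⟩ ⟨q, hq⟩)
    have hrlen : ((p.takeUntil u' hu').dropUntil v' hv1).length = p.length := by
      have := congrArg Walk.length hrq
      rwa [Walk.length_reverse, ← hlen] at this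
    have hsum2 : ((p.takeUntil u' hu').takeUntil v' hv1).length
        + ((p.takeUntil u' hu').dropUntil v' hv1).length = (p.takeUntil u' hu').length := by
      rw [← Walk.length_append, Walk.take_spec]
    have h1 : ((p.takeUntil u' hu').takeUntil v' hv1).length = 0 := by omega
    have h2 : (p.dropUntil u' hu').length = 0 := by omega
    exact ⟨Walk.eq_of_length_eq_zero h1, (Walk.eq_of_length_eq_zero h2).symm⟩
  · -- v' lies on the segment from u' to v
    left
    have hr : ((p.dropUntil u' hu').takeUntil v' hv2).IsPath :=
      (hp.dropUntil hu').takeUntil hv2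
    have hrq : (p.dropUntil u' hu').takeUntil v' hv2 = q :=
      congrArg Subtype.val (hA.path_unique ⟨_, hr⟩ ⟨q, hq⟩)
    have hrlen : ((p.dropUntil u' hu').takeUntil v' hv2).length = p.length := by
      rw [hrq, hlen]
    have hsum2 : ((p.dropUntil u' hu').takeUntil v' hv2).length
        + ((p.dropUntil u' hu').dropUntil v' hv2).length = (p.dropUntil u' hu').length := by
      rw [← Walk.length_append, Walk.take_spec]
    have h1 : (p.takeUntil u' hu').length = 0 := by omega
    have h2 : ((p.dropUntil u' hu').dropUntil v' hv2).length = 0 := by omega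
    exact ⟨Walk.eq_of_length_eq_zero h1, (Walk.eq_of_length_eq_zero h2).symm⟩

/-- Discrete intermediate value property for walks in induced subgraphs of the path graph. -/
lemma pathGraph_walk_mem {n : ℕ} {s : Set (Fin n)} {x y : ↥s}
    (w : ((pathGraph n).induce s).Walk x y) :
    ∀ c : Fin n, min (x : Fin n).val (y : Fin n).val ≤ c.val →
      c.val ≤ max (x : Fin n).val (y : Fin n).val → c ∈ s := by
  induction w with
  | nil =>
    rename_i x
    intro c h1 h2
    have hc : c = (x : Fin n) := by
      apply Fin.ext; omega
    rw [hc]; exact x.2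
  | @cons a b y' h' w ih =>
    intro c h1 h2
    have hadj : (a : Fin n).val + 1 = (b : Fin n).val ∨
        (b : Fin n).val + 1 = (a : Fin n).val := by
      have hadj' : (pathGraph n).Adj (a : Fin n) (b : Fin n) := by simpa using h'
      exact pathGraph_adj.mp hadj'
    by_cases hc : min (b : Fin n).val (y' : Fin n).val ≤ c.val ∧
        c.val ≤ max (b : Fin n).val (y' : Fin n).val
    · exact ih c hc.1 hc.2
    · have : c = (a : Fin n) := by apply Fin.ext; omega
      rw [this]; exact a.2

/-- A monotone walk in the path graph with support exactly `Icc a b`. -/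
lemma pathGraph_exists_walk_Icc {n : ℕ} :
    ∀ (k : ℕ) (a b : Fin n), a ≤ b → b.val - a.val = k →
      ∃ w : (pathGraph n).Walk a b, ∀ x, x ∈ w.support ↔ x ∈ Set.Icc a b := by
  intro k
  induction k with
  | zero =>
    intro a b hab hk
    have : a = b := by
      apply Fin.ext
      have := Fin.le_def.mp hab
      omega
    subst this
    exact ⟨Walk.nil, by simp⟩
  | succ k ih =>
    intro a b hab hk
    have hab' : a.val ≤ b.val := Fin.le_def.mp hab
    have hlt : a.val < b.val := by omega
    set a' : Fin n := ⟨a.val + 1, lt_of_le_of_lt hlt b.isLt⟩ with ha'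
    have hadj : (pathGraph n).Adj a a' := pathGraph_adj.mpr (Or.inl rfl)
    obtain ⟨w, hw⟩ := ih a' b (Fin.le_def.mpr (by simp [ha']; omega))
      (by simp [ha']; omega)
    refine ⟨Walk.cons hadj w, ?_⟩
    intro x
    simp only [Walk.support_cons, List.mem_cons, hw, Set.mem_Icc]
    constructor
    · rintro (rfl | ⟨h1, h2⟩)
      · exact ⟨le_refl _, hab⟩
      · refine ⟨le_trans ?_ h1, h2⟩
        exact Fin.le_def.mpr (by simp [ha'])
    · rintro ⟨h1, h2⟩
      by_cases hx : x = a
      · exact Or.inl hx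
      · refine Or.inr ⟨?_, h2⟩
        have h1' := Fin.le_def.mp h1
        have hne : x.val ≠ a.val := fun h => hx (Fin.ext h)
        exact Fin.le_def.mpr (by simp [ha']; omega)

lemma pathGraph_icc_connected {n : ℕ} {a b : Fin n} (hab : a ≤ b) :
    ((pathGraph n).induce (Set.Icc a b)).Connected := by
  obtain ⟨w, hw⟩ := pathGraph_exists_walk_Icc (b.val - a.val) a b hab rfl
  have hset : {x | x ∈ w.support} = Set.Icc a b := Set.ext hw
  have := w.connected_induce_support
  rwa [hset] at this

lemma pathGraph_subtree_eq_Icc {n : ℕ} {s : Set (Fin n)} (hne : s.Nonempty)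
    (hc : ((pathGraph n).induce s).Connected) :
    ∃ a b : Fin n, a ≤ b ∧ s = Set.Icc a b := by
  obtain ⟨a, ha, hamin⟩ := Set.exists_min_image s id s.toFinite hne
  obtain ⟨b, hb, hbmax⟩ := Set.exists_max_image s id s.toFinite hne
  refine ⟨a, b, hamin b hb, ?_⟩
  ext c
  constructor
  · intro hcs
    exact ⟨hamin c hcs, hbmax c hcs⟩
  · rintro ⟨h1, h2⟩
    obtain ⟨w⟩ := hc.preconnected ⟨a, ha⟩ ⟨b, hb⟩
    refine pathGraph_walk_mem w c ?_ ?_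
    · show min a.val b.val ≤ c.val
      have := Fin.le_def.mp h1
      have := Fin.le_def.mp (hamin b hb)
      omega
    · show c.val ≤ max a.val b.val
      have := Fin.le_def.mp h2
      have := Fin.le_def.mp (hamin b hb)
      omega

end Aux

/-- The path `Pₙ` on `n` vertices has exactly `n(n+1)/2`
subtrees, and every tree on `n` vertices has at least `n(n+1)/2` subtrees
(the minimum is attained by the path). -/
theorem path_minimizes_subtrees (n : ℕ) (hn : 1 ≤ n) :
    numSubtrees (SimpleGraph.pathGraph n) = n * (n + 1) / 2 ∧
      ∀ (V : Type) [Fintype V] (T : SimpleGraph V),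
        Fintype.card V = n → T.IsTree → n * (n + 1) / 2 ≤ numSubtrees T := by
  classical
  constructor
  · -- exact count for the path graph
    unfold numSubtrees
    set S : Set (Set (Fin n)) :=
      {s : Set (Fin n) | s.Nonempty ∧ ((pathGraph n).induce s).Connected} with hS
    let e := Sym2.sortEquiv (α := Fin n)
    have hmem : ∀ z : Sym2 (Fin n),
        Set.Icc (e z).1.1 (e z).1.2 ∈ S := fun z =>
      ⟨Set.nonempty_Icc.mpr (e z).2, pathGraph_icc_connected (e z).2⟩
    let g : Sym2 (Fin n) → ↥S := fun z => ⟨_, hmem z⟩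
    have hbij : Function.Bijective g := by
      constructor
      · intro z z' h
        have h' : Set.Icc (e z).1.1 (e z).1.2 = Set.Icc (e z').1.1 (e z').1.2 :=
          congrArg Subtype.val h
        have hab := (e z).2
        have hab' := (e z').2
        have m1 : (e z).1.1 ∈ Set.Icc (e z).1.1 (e z).1.2 :=
          Set.mem_Icc.mpr ⟨le_refl _, hab⟩
        have m2 : (e z').1.1 ∈ Set.Icc (e z').1.1 (e z').1.2 :=
          Set.mem_Icc.mpr ⟨le_refl _, hab'⟩
        have m3 : (e z).1.2 ∈ Set.Icc (e z).1.1 (e z).1.2 :=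
          Set.mem_Icc.mpr ⟨hab, le_refl _⟩
        have m4 : (e z').1.2 ∈ Set.Icc (e z').1.1 (e z').1.2 :=
          Set.mem_Icc.mpr ⟨hab', le_refl _⟩
        rw [h'] at m1 m3
        rw [← h'] at m2 m4
        have h1 : (e z).1.1 = (e z').1.1 :=
          le_antisymm (Set.mem_Icc.mp m2).1 (Set.mem_Icc.mp m1).1
        have h2 : (e z).1.2 = (e z').1.2 :=
          le_antisymm (Set.mem_Icc.mp m3).2 (Set.mem_Icc.mp m4).2
        have : (e z) = (e z') := Subtype.ext (Prod.ext_iff.mpr ⟨h1, h2⟩)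
        exact e.injective this
      · rintro ⟨s, hne, hc⟩
        obtain ⟨a, b, hab, rfl⟩ := pathGraph_subtree_eq_Icc hne hc
        refine ⟨e.symm ⟨(a, b), hab⟩, ?_⟩
        apply Subtype.ext
        show Set.Icc (e (e.symm ⟨(a, b), hab⟩)).1.1 (e (e.symm ⟨(a, b), hab⟩)).1.2
            = Set.Icc a b
        rw [Equiv.apply_symm_apply]
    have hcard : Nat.card ↥S = Nat.card (Sym2 (Fin n)) :=
      (Nat.card_congr (Equiv.ofBijective g hbij)).symm
    rw [← Nat.card_coe_set_eq, hcard, Nat.card_eq_fintype_card, Sym2.card,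
      Fintype.card_fin, Nat.choose_two_right, Nat.add_sub_cancel, Nat.mul_comm]
  · -- lower bound for arbitrary trees
    intro V _ T hcard hT
    unfold numSubtrees
    set S : Set (Set V) := {s : Set V | s.Nonempty ∧ (T.induce s).Connected} with hS
    choose P hP using fun u v : V => hT.existsUnique_path u v
    have hsymmF : ∀ u v : V,
        {x | x ∈ (P u v).support} = {x | x ∈ (P v u).support} := by
      intro u v
      have hrev : (P u v).reverse = P v u := (hP v u).2 _ ((hP u v).1.reverse)
      ext x
      simp only [Set.mem_setOf_eq, ← hrev, Walk.support_reverse, List.mem_reverse]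
    let F : Sym2 V → Set V :=
      Sym2.lift ⟨fun u v => {x | x ∈ (P u v).support}, hsymmF⟩
    have hFmem : ∀ z, F z ∈ S := by
      intro z
      induction z using Sym2.ind with
      | _ u v =>
        refine ⟨⟨u, (P u v).start_mem_support⟩, ?_⟩
        exact (P u v).connected_induce_support
    have hFinj : Function.Injective F := by
      intro z w h
      induction z using Sym2.ind with
      | _ u v =>
        induction w using Sym2.ind with
        | _ u' v' =>
          have hsets : ∀ x, x ∈ (P u v).support ↔ x ∈ (P u' v').support := by
            intro x
            have := Set.ext_iff.mp h x
            simpa [F] using this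
          rcases path_support_endpoints hT.2 (P u v) (hP u v).1 (P u' v') (hP u' v').1
            hsets with ⟨rfl, rfl⟩ | ⟨rfl, rfl⟩
          · rfl
          · exact Sym2.eq_swap
    have hle : Nat.card (Sym2 V) ≤ Nat.card ↥S :=
      Nat.card_le_card_of_injective (fun z => ⟨F z, hFmem z⟩)
        (fun z w h => hFinj (congrArg Subtype.val h))
    have hsym2 : Nat.card (Sym2 V) = n * (n + 1) / 2 := by
      rw [Nat.card_eq_fintype_card, Sym2.card, hcard, Nat.choose_two_right,
        Nat.add_sub_cancel, Nat.mul_comm]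
    rw [← Nat.card_coe_set_eq, ← hsym2]
    exact hle
end
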